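/- arXiv:1307.2834 — 2 statements merged into one kernel-verified Lean document; each statement's English description precedes it below -/
import Mathlib

section
/- For every integer N ≥ 2 and all real numbers s > t, the minimal average standardized Riesz pair-energy is strictly increasing in the Riesz parameter: v_s(N) > v_t(N). -/
open scoped BigOperators

/-- The standardized Riesz pair-energy `V_s(r) = (r^{-s} - 1)/s` for `s ≠ 0`,
and `V_0(r) = -log r`. -/
noncomputable def Vpair (s r : ℝ) : ℝ := if s = 0 then -Real.log r else (r ^ (-s) - 1) / s

/-- The average standardized Riesz pair-energy of an `N`-point configuration on the
unit sphere `S² ⊂ ℝ³`. -/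
noncomputable def avgE (s : ℝ) (N : ℕ) (q : Fin N → EuclideanSpace ℝ (Fin 3)) : ℝ :=
  2 / ((N : ℝ) * ((N : ℝ) - 1)) *
    ∑ i : Fin N, ∑ j : Fin N, if i < j then Vpair s ‖q i - q j‖ else 0

/-- The minimal average standardized Riesz pair-energy `v_s(N)`: the infimum of the
average pair-energy over all configurations of `N` pairwise distinct points on `S²`. -/
noncomputable def vmin (s : ℝ) (N : ℕ) : ℝ :=
  sInf { E : ℝ | ∃ q : Fin N → EuclideanSpace ℝ (Fin 3),
    (∀ i, ‖q i‖ = 1) ∧ Function.Injective q ∧ E = avgE s N q }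

/-!
For fixed `r > 0` the difference `V_s(r) - V_t(r)` has derivative `r^(-t-1) - r^(-s-1)`, so it
decreases on `(0, 1]`, increases on `[1, ∞)` and vanishes only at `r = 1`. Hence
`⟨V_s⟩ ≥ ⟨V_t⟩ ≥ v_t(N)` for every configuration, with a gain bounded below uniformly as soon
as some mutual distance is `η`-far from `1`.

For `N ≥ 4` this always happens for a fixed `η > 0`: four unit vectors at mutual distance `1`
would be linearly independent in `ℝ³`, and `(S²)ᴺ` is compact. For `N ≤ 3`, where all
distances may equal `1`, the points `e₁, -e₁, e₂` show `v_t(N) < 0`, while a configuration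
whose distances are all close to `1` has `⟨V_s⟩` close to `V_s(1) = 0`.
-/

open Finset Set

lemma Vpair_one (s : ℝ) : Vpair s 1 = 0 := by
  unfold Vpair; split_ifs <;> simp

lemma hasDerivAt_Vpair (s : ℝ) {r : ℝ} (hr : 0 < r) :
    HasDerivAt (Vpair s) (-r ^ (-s - 1)) r := by
  by_cases hs : s = 0
  · have h : Vpair s = fun x => -Real.log x := funext fun x => if_pos hs
    rw [h, hs, neg_zero, zero_sub, Real.rpow_neg_one]
    exact (Real.hasDerivAt_log hr.ne').neg
  · have h : Vpair s = fun x => (x ^ (-s) - 1) / s := funext fun x => if_neg hs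
    rw [h]
    exact (((Real.hasDerivAt_rpow_const (p := -s) (Or.inl hr.ne')).sub_const 1).div_const s
      ).congr_deriv (by field_simp)

lemma strictAntiOn_Vpair (s : ℝ) : StrictAntiOn (Vpair s) (Ioi 0) :=
  strictAntiOn_of_hasDerivWithinAt_neg (convex_Ioi 0)
    (fun _ hr => (hasDerivAt_Vpair s hr).continuousAt.continuousWithinAt)
    (fun _ hr => (hasDerivAt_Vpair s (interior_subset hr)).hasDerivWithinAt)
    (fun r hr => neg_neg_iff_pos.2 (Real.rpow_pos_of_pos (interior_subset hr : 0 < r) _))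

section Difference

variable {s t : ℝ}

lemma hasDerivAt_Vpair_sub_Vpair {r : ℝ} (hr : 0 < r) :
    HasDerivAt (fun x => Vpair s x - Vpair t x) (r ^ (-t - 1) - r ^ (-s - 1)) r :=
  ((hasDerivAt_Vpair s hr).sub (hasDerivAt_Vpair t hr)).congr_deriv (by ring)

lemma strictAntiOn_Vpair_sub_Vpair (h : t < s) :
    StrictAntiOn (fun r => Vpair s r - Vpair t r) (Ioc 0 1) :=
  strictAntiOn_of_hasDerivWithinAt_neg (convex_Ioc 0 1)
    (fun _ hr => (hasDerivAt_Vpair_sub_Vpair hr.1).continuousAt.continuousWithinAt)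
    (fun _ hr => (hasDerivAt_Vpair_sub_Vpair (interior_subset hr).1).hasDerivWithinAt)
    fun r hr => by
      rw [interior_Ioc] at hr
      linarith [Real.rpow_lt_rpow_of_exponent_gt hr.1 hr.2 (by linarith : -s - 1 < -t - 1)]

lemma strictMonoOn_Vpair_sub_Vpair (h : t < s) :
    StrictMonoOn (fun r => Vpair s r - Vpair t r) (Ici 1) :=
  strictMonoOn_of_hasDerivWithinAt_pos (convex_Ici 1)
    (fun _ hr => (hasDerivAt_Vpair_sub_Vpair
      (zero_lt_one.trans_le hr)).continuousAt.continuousWithinAt)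
    (fun _ hr => (hasDerivAt_Vpair_sub_Vpair
      (zero_lt_one.trans_le (interior_subset hr))).hasDerivWithinAt)
    fun r hr => by
      rw [interior_Ici] at hr
      linarith [Real.rpow_lt_rpow_of_exponent_lt hr (by linarith : -s - 1 < -t - 1)]

lemma Vpair_sub_Vpair_nonneg (h : t < s) {r : ℝ} (hr : 0 < r) : 0 ≤ Vpair s r - Vpair t r := by
  have h1 : Vpair s 1 - Vpair t 1 = 0 := by simp [Vpair_one]
  rcases le_total r 1 with hr1 | hr1
  · exact h1 ▸ (strictAntiOn_Vpair_sub_Vpair h).antitoneOn ⟨hr, hr1⟩ ⟨one_pos, le_rfl⟩ hr1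
  · exact h1 ▸ (strictMonoOn_Vpair_sub_Vpair h).monotoneOn self_mem_Ici hr1 hr1

lemma exists_pos_le_Vpair_sub_Vpair (h : t < s) {η : ℝ} (hη : 0 < η) :
    ∃ c > 0, ∀ r, 0 < r → η ≤ |r - 1| → c ≤ Vpair s r - Vpair t r := by
  set D := fun r => Vpair s r - Vpair t r
  have hD1 : D 1 = 0 := by simp [D, Vpair_one]
  set δ := min η (1 / 2)
  have hδ : 0 < δ := lt_min hη one_half_pos
  have hδ1 : δ < 1 := (min_le_right _ _).trans_lt one_half_lt_one
  refine ⟨min (D (1 - δ)) (D (1 + η)), lt_min ?_ ?_, fun r hr hr1 => ?_⟩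
  · exact hD1 ▸ strictAntiOn_Vpair_sub_Vpair h ⟨by linarith, by linarith⟩ ⟨one_pos, le_rfl⟩
      (by linarith)
  · exact hD1 ▸ strictMonoOn_Vpair_sub_Vpair h self_mem_Ici (by simp [hη.le]) (by linarith)
  rcases le_abs'.1 hr1 with hr1 | hr1
  · refine (min_le_left _ _).trans ((strictAntiOn_Vpair_sub_Vpair h).antitoneOn
      ⟨hr, by linarith⟩ ⟨by linarith, by linarith⟩ ?_)
    linarith [min_le_left η (1 / 2)]
  · exact (min_le_right _ _).trans ((strictMonoOn_Vpair_sub_Vpair h).monotoneOn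
      (by simp [hη.le]) (by simp only [Set.mem_Ici]; linarith) (by linarith))

end Difference

noncomputable def pairAvg (N : ℕ) (f : Fin N → Fin N → ℝ) : ℝ :=
  2 / ((N : ℝ) * ((N : ℝ) - 1)) * ∑ i : Fin N, ∑ j : Fin N, if i < j then f i j else 0

section PairAvg

variable {N : ℕ} {f g : Fin N → Fin N → ℝ}

lemma sum_sum_ite_lt_one_mul_two (N : ℕ) :
    (∑ i : Fin N, ∑ j : Fin N, if i < j then (1 : ℝ) else 0) * 2 = N * (N - 1) := by
  have h : (∑ i : Fin N, #(Ioi i)) * 2 = N * (N - 1) := by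
    simp only [Fin.card_Ioi]
    rw [Fin.sum_univ_eq_sum_range (fun i => N - 1 - i), ← Finset.sum_range_id_mul_two,
      Finset.sum_range_reflect (fun i => i)]
  simp only [Finset.sum_boole, Finset.filter_lt_eq_Ioi]
  rcases N.eq_zero_or_pos with rfl | hN
  · simp
  · have h' := congrArg (Nat.cast (R := ℝ)) h
    push_cast [Nat.cast_sub hN] at h'
    exact h'

lemma two_div_mul_sub_one_nonneg (N : ℕ) : 0 ≤ 2 / ((N : ℝ) * ((N : ℝ) - 1)) := by
  rcases N with _ | N
  · simp
  · push_cast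
    rw [add_sub_cancel_right]
    positivity

lemma pairAvg_const (hN : 2 ≤ N) (c : ℝ) : pairAvg N (fun _ _ => c) = c := by
  have hN' : (2 : ℝ) ≤ N := by exact_mod_cast hN
  have hN1 : (N : ℝ) - 1 ≠ 0 := by linarith
  have h := sum_sum_ite_lt_one_mul_two N
  simp only [pairAvg]
  rw [show (∑ i : Fin N, ∑ j : Fin N, if i < j then c else 0) =
      c * ∑ i : Fin N, ∑ j : Fin N, if i < j then (1 : ℝ) else 0 by
    simp only [Finset.mul_sum, mul_ite, mul_one, mul_zero], eq_div_of_mul_eq two_ne_zero h]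
  field_simp

lemma pairAvg_mono (h : ∀ i j, i < j → f i j ≤ g i j) : pairAvg N f ≤ pairAvg N g :=
  mul_le_mul_of_nonneg_left (Finset.sum_le_sum fun i _ => Finset.sum_le_sum fun j _ => by
    split_ifs with hij
    exacts [h i j hij, le_rfl]) (two_div_mul_sub_one_nonneg N)

lemma pairAvg_sub_pairAvg :
    pairAvg N f - pairAvg N g = pairAvg N (fun i j => f i j - g i j) := by
  simp only [pairAvg, ← mul_sub, ← Finset.sum_sub_distrib, ite_sub_ite, sub_zero]

lemma mul_le_pairAvg (hf : ∀ i j, i < j → 0 ≤ f i j) {i j : Fin N} (hij : i < j) :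
    2 / ((N : ℝ) * ((N : ℝ) - 1)) * f i j ≤ pairAvg N f := by
  have hterm : ∀ i j, 0 ≤ if i < j then f i j else 0 := fun i j => by
    split_ifs with h
    exacts [hf i j h, le_rfl]
  refine mul_le_mul_of_nonneg_left ?_ (two_div_mul_sub_one_nonneg N)
  calc f i j = if i < j then f i j else 0 := (if_pos hij).symm
    _ ≤ ∑ j', if i < j' then f i j' else 0 :=
      Finset.single_le_sum (fun j' _ => hterm i j') (Finset.mem_univ j)
    _ ≤ _ := Finset.single_le_sum (f := fun i => ∑ j', if i < j' then f i j' else 0)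
      (fun i' _ => Finset.sum_nonneg fun j' _ => hterm i' j') (Finset.mem_univ i)

end PairAvg

section Geometry

variable {E : Type*} [NormedAddCommGroup E] [InnerProductSpace ℝ E]

lemma inner_eq_one_half_of_norm_sub_eq_one {x y : E} (hx : ‖x‖ = 1) (hy : ‖y‖ = 1)
    (hxy : ‖x - y‖ = 1) : inner ℝ x y = 1 / 2 := by
  have h := norm_sub_sq_real x y
  rw [hx, hy, hxy] at h
  linarith

/-- Unit vectors at mutual distance `1` have Gram matrix `(I + J) / 2`, which is invertible. -/
lemma linearIndependent_of_norm_eq_one_of_norm_sub_eq_one {ι : Type*} [Fintype ι] {v : ι → E}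
    (hv : ∀ i, ‖v i‖ = 1) (hd : Pairwise fun i j => ‖v i - v j‖ = 1) :
    LinearIndependent ℝ v := by
  classical
  rw [Fintype.linearIndependent_iff]
  intro g hg
  have hcoord : ∀ j, g j = -∑ i, g i := fun j => by
    have h0 : inner ℝ (v j) (∑ i, g i • v i) = 0 := by rw [hg, inner_zero_right]
    have hterm : ∀ i, inner ℝ (v j) (g i • v i) = g i / 2 + if j = i then g i / 2 else 0 :=
      fun i => by
        rw [real_inner_smul_right]
        split_ifs with hji
        · rw [hji, real_inner_self_eq_norm_sq, hv]; ring
        · rw [inner_eq_one_half_of_norm_sub_eq_one (hv j) (hv i) (hd hji)]; ring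
    rw [inner_sum, Finset.sum_congr rfl fun i _ => hterm i, Finset.sum_add_distrib,
      Finset.sum_ite_eq, if_pos (Finset.mem_univ j), ← Finset.sum_div] at h0
    linarith
  have hsum : ∑ i, g i = 0 := by
    have h := Finset.sum_congr rfl fun j (_ : j ∈ Finset.univ) => hcoord j
    rw [Finset.sum_const, nsmul_eq_mul] at h
    have hpos : (0 : ℝ) < 1 + #(Finset.univ : Finset ι) :=
      add_pos_of_pos_of_nonneg one_pos (Nat.cast_nonneg _)
    have h' : (1 + (#(Finset.univ : Finset ι) : ℝ)) * ∑ i, g i = 0 := by linear_combination h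
    exact (mul_eq_zero.1 h').resolve_left hpos.ne'
  exact fun i => by rw [hcoord i, hsum, neg_zero]

lemma sqrt_two_le_norm_sub {x y : E} (hx : ‖x‖ = 1) (hy : ‖y‖ = 1) (hxy : inner ℝ x y ≤ 0) :
    √2 ≤ ‖x - y‖ := by
  rw [Real.sqrt_le_left (norm_nonneg _), norm_sub_sq_real, hx, hy]
  linarith

end Geometry

local notation "E³" => EuclideanSpace ℝ (Fin 3)

section Configurations

variable {N : ℕ} {q : Fin N → E³}

lemma avgE_eq_pairAvg (s : ℝ) : avgE s N q = pairAvg N fun i j => Vpair s ‖q i - q j‖ := rfl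

lemma norm_sub_pos_of_injective (hq : Function.Injective q) {i j : Fin N} (hij : i ≠ j) :
    0 < ‖q i - q j‖ :=
  norm_pos_iff.2 (sub_ne_zero.2 (hq.ne hij))

lemma Vpair_le_avgE (hN : 2 ≤ N) (s : ℝ) (hq : Function.Injective q) {R : ℝ}
    (hR : ∀ i j, i < j → ‖q i - q j‖ ≤ R) : Vpair s R ≤ avgE s N q := by
  rw [avgE_eq_pairAvg, ← pairAvg_const hN (Vpair s R)]
  refine pairAvg_mono fun i j hij => ?_
  have hr := norm_sub_pos_of_injective hq hij.ne
  exact strictAntiOn_Vpair s |>.antitoneOn hr (hr.trans_le (hR i j hij)) (hR i j hij)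

lemma avgE_le_Vpair (hN : 2 ≤ N) (s : ℝ) {r : ℝ} (hr : 0 < r)
    (hR : ∀ i j, i < j → r ≤ ‖q i - q j‖) : avgE s N q ≤ Vpair s r := by
  rw [avgE_eq_pairAvg, ← pairAvg_const hN (Vpair s r)]
  exact pairAvg_mono fun i j hij =>
    strictAntiOn_Vpair s |>.antitoneOn hr (hr.trans_le (hR i j hij)) (hR i j hij)

lemma exists_injective_forall_norm_eq_one (N : ℕ) :
    ∃ q : Fin N → E³, (∀ i, ‖q i‖ = 1) ∧ Function.Injective q := by
  have hrank : 1 < Module.rank ℝ E³ := by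
    rw [← Module.finrank_eq_rank, finrank_euclideanSpace_fin]; norm_num
  have hinf : (Metric.sphere (0 : E³) 1).Infinite := by
    refine (isConnected_sphere hrank 0 zero_le_one).isPreconnected.infinite_of_nontrivial
      ⟨EuclideanSpace.single 0 1, ?_, -EuclideanSpace.single 0 1, ?_, ?_⟩
    · simp
    · simp
    · intro h
      have := congrArg (· 0) h
      norm_num at this
  let e := (Fin.valEmbedding (n := N)).trans hinf.natEmbedding
  exact ⟨fun i => e i, fun i => by simp, Subtype.val_injective.comp e.injective⟩

lemma vmin_le_avgE (hN : 2 ≤ N) (s : ℝ) (hq : ∀ i, ‖q i‖ = 1) (hinj : Function.Injective q) :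
    vmin s N ≤ avgE s N q := by
  refine csInf_le ⟨Vpair s 2, ?_⟩ ⟨q, hq, hinj, rfl⟩
  rintro _ ⟨q', hq', hinj', rfl⟩
  refine Vpair_le_avgE hN s hinj' fun i j _ => (norm_sub_le _ _).trans ?_
  rw [hq', hq']
  norm_num

lemma le_vmin {s B : ℝ}
    (hB : ∀ q : Fin N → E³, (∀ i, ‖q i‖ = 1) → Function.Injective q → B ≤ avgE s N q) :
    B ≤ vmin s N := by
  obtain ⟨q, hq, hinj⟩ := exists_injective_forall_norm_eq_one N
  refine le_csInf ⟨_, q, hq, hinj, rfl⟩ ?_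
  rintro _ ⟨q', hq', hinj', rfl⟩
  exact hB q' hq' hinj'

lemma exists_pos_vmin_add_le_avgE (hN : 2 ≤ N) {s t : ℝ} (h : t < s) {η : ℝ} (hη : 0 < η) :
    ∃ γ > 0, ∀ q : Fin N → E³, (∀ i, ‖q i‖ = 1) → Function.Injective q →
      (∃ i j, i < j ∧ η ≤ |‖q i - q j‖ - 1|) → vmin t N + γ ≤ avgE s N q := by
  obtain ⟨c, hc, hcD⟩ := exists_pos_le_Vpair_sub_Vpair h hη
  have hγ : 0 < 2 / ((N : ℝ) * ((N : ℝ) - 1)) * c := by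
    have hN' : (2 : ℝ) ≤ N := by exact_mod_cast hN
    have : (0 : ℝ) < N - 1 := by linarith
    positivity
  refine ⟨_, hγ, fun q hq hinj ⟨i, j, hij, hfar⟩ => ?_⟩
  have hpos {i j : Fin N} (hij : i < j) := norm_sub_pos_of_injective hinj hij.ne
  have hgap : 2 / ((N : ℝ) * ((N : ℝ) - 1)) * c ≤ avgE s N q - avgE t N q := by
    rw [avgE_eq_pairAvg, avgE_eq_pairAvg, pairAvg_sub_pairAvg]
    calc _ ≤ 2 / ((N : ℝ) * ((N : ℝ) - 1)) * (Vpair s ‖q i - q j‖ - Vpair t ‖q i - q j‖) :=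
          mul_le_mul_of_nonneg_left (hcD _ (hpos hij) hfar) (two_div_mul_sub_one_nonneg N)
      _ ≤ _ := mul_le_pairAvg (fun _ _ hij => Vpair_sub_Vpair_nonneg h (hpos hij)) hij
  linarith [vmin_le_avgE hN t hq hinj]

end Configurations

lemma exists_lt_norm_sub_ne_one {N : ℕ} (hN : 4 ≤ N) {q : Fin N → E³} (hq : ∀ i, ‖q i‖ = 1) :
    ∃ i j, i < j ∧ ‖q i - q j‖ ≠ 1 := by
  by_contra! h
  have hli : LinearIndependent ℝ fun k : Fin 4 => q (Fin.castLE hN k) := by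
    refine linearIndependent_of_norm_eq_one_of_norm_sub_eq_one (fun k => hq _) fun k l hkl => ?_
    rcases (Fin.castLE_injective hN).ne hkl |>.lt_or_gt with hlt | hlt
    · exact h _ _ hlt
    · rw [norm_sub_rev]; exact h _ _ hlt
  have := hli.fintype_card_le_finrank
  rw [Fintype.card_fin, finrank_euclideanSpace_fin] at this
  omega

/-- Compactness of `(S²)ᴺ` makes the previous lemma quantitative. -/
lemma exists_pos_forall_exists_le_abs_norm_sub_sub_one {N : ℕ} (hN : 4 ≤ N) :
    ∃ η > 0, ∀ q : Fin N → E³, (∀ i, ‖q i‖ = 1) → ∃ i j, i < j ∧ η ≤ |‖q i - q j‖ - 1| := by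
  set K : Set (Fin N → E³) := Set.univ.pi fun _ => Metric.sphere 0 1
  have hK : IsCompact K := isCompact_univ_pi fun _ => isCompact_sphere 0 1
  have hmemK : ∀ q : Fin N → E³, q ∈ K ↔ ∀ i, ‖q i‖ = 1 := by simp [K]
  set F : (Fin N → E³) → ℝ := fun q => pairAvg N fun i j => |‖q i - q j‖ - 1|
  have hF : Continuous F :=
    continuous_const.mul <| continuous_finsetSum _ fun i _ => continuous_finsetSum _ fun j _ => by
      split_ifs <;> fun_prop
  obtain ⟨q₀, hq₀, hmin⟩ := hK.exists_isMinOn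
    ⟨fun _ => EuclideanSpace.single 0 1, (hmemK _).2 fun _ => by simp⟩ hF.continuousOn
  obtain ⟨i, j, hij, hne⟩ := exists_lt_norm_sub_ne_one hN ((hmemK q₀).1 hq₀)
  have hN' : (4 : ℝ) ≤ N := by exact_mod_cast hN
  have hμ : 0 < F q₀ := by
    refine lt_of_lt_of_le ?_ (mul_le_pairAvg (fun _ _ _ => abs_nonneg _) hij)
    have : (0 : ℝ) < N - 1 := by linarith
    have : 0 < |‖q₀ i - q₀ j‖ - 1| := abs_pos.2 (sub_ne_zero.2 hne)
    positivity
  refine ⟨F q₀ / 2, by positivity, fun q hq => ?_⟩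
  by_contra! hnear
  have hFq : F q ≤ F q₀ / 2 := (pairAvg_mono fun i j hij => (hnear i j hij).le).trans
    (pairAvg_const (by omega) _).le
  linarith [isMinOn_iff.1 hmin q ((hmemK q).2 hq)]

lemma vmin_neg {N : ℕ} (hN : 2 ≤ N) (hN3 : N ≤ 3) (t : ℝ) : vmin t N < 0 := by
  set e : Fin 3 → E³ :=
    ![EuclideanSpace.single 0 1, -EuclideanSpace.single 0 1, EuclideanSpace.single 1 1]
  have he : ∀ k, ‖e k‖ = 1 := by
    intro k; fin_cases k <;> simp [e]
  have he' : ∀ k l, k ≠ l → inner ℝ (e k) (e l) ≤ 0 := by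
    intro k l hkl; fin_cases k <;> fin_cases l <;>
      simp_all [e, EuclideanSpace.inner_single_left]
  set q := fun i : Fin N => e (Fin.castLE hN3 i)
  have hq : ∀ i j, i ≠ j → √2 ≤ ‖q i - q j‖ := fun i j hij =>
    sqrt_two_le_norm_sub (he _) (he _) (he' _ _ ((Fin.castLE_injective hN3).ne hij))
  have hinj : Function.Injective q := fun i j hij => by
    by_contra hne
    have := hq i j hne
    rw [hij, sub_self, norm_zero] at this
    exact (Real.sqrt_pos.2 two_pos).not_ge this
  calc vmin t N ≤ avgE t N q := vmin_le_avgE hN t (fun _ => he _) hinj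
    _ ≤ Vpair t √2 := avgE_le_Vpair hN t (by positivity) fun i j hij => hq i j hij.ne
    _ < Vpair t 1 :=
      strictAntiOn_Vpair t (mem_Ioi.2 one_pos) (Real.sqrt_pos.2 two_pos) Real.one_lt_sqrt_two
    _ = 0 := Vpair_one t

theorem stmt9 (N : ℕ) (hN : 2 ≤ N) (s t : ℝ) (h : t < s) :
    vmin t N < vmin s N := by
  obtain ⟨η, hη, B, hB, hnear⟩ : ∃ η > 0, ∃ B > vmin t N, ∀ q : Fin N → E³,
      (∀ i, ‖q i‖ = 1) → Function.Injective q → (∀ i j, i < j → |‖q i - q j‖ - 1| < η) →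
        B ≤ avgE s N q := by
    rcases le_or_gt 4 N with hN4 | hN3
    · obtain ⟨η, hη, hfar⟩ := exists_pos_forall_exists_le_abs_norm_sub_sub_one hN4
      refine ⟨η, hη, vmin t N + 1, by linarith, fun q hq _ hnear => ?_⟩
      obtain ⟨i, j, hij, hij'⟩ := hfar q hq
      exact absurd (hnear i j hij) hij'.not_gt
    · obtain ⟨r, hr1, hr⟩ := ((hasDerivAt_Vpair s one_pos).continuousAt.eventually
        (lt_mem_nhds (Vpair_one s ▸ vmin_neg hN (by omega) t))).exists_gt
      refine ⟨r - 1, by linarith, Vpair s r, hr, fun q _ hinj hnear =>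
        Vpair_le_avgE hN s hinj fun i j hij => ?_⟩
      linarith [(abs_lt.1 (hnear i j hij)).2]
  obtain ⟨γ, hγ, hfar⟩ := exists_pos_vmin_add_le_avgE hN h hη
  calc vmin t N < min (vmin t N + γ) B := lt_min (by linarith) hB
    _ ≤ vmin s N := le_vmin fun q hq hinj => by
      by_cases hq' : ∃ i j, i < j ∧ η ≤ |‖q i - q j‖ - 1|
      · exact (min_le_left _ _).trans (hfar q hq hinj hq')
      · push Not at hq'
        exact (min_le_right _ _).trans (hnear q hq hinj hq')
end

section
/- Let s < 0 and let N > 2 be an integer. Then v_s(N) ≥ ((N+1)N/((N+2)(N-1)))·v_s(N+1) - 2·V_s(0)/((N+2)(N-1)), where V_s(0) = -1/s; equivalently, v_s(N) ≥ ((N+1)N·v_s(N+1) + 2/s)/((N+2)(N-1)). -/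
open scoped BigOperators

/-!
Among the points of an `N`-point configuration some `q k` interacts with the others at most as
much as the average point, i.e. with total energy at most `2 E / N`, where `E` is the energy of
the configuration. Adding a second copy of `q k` therefore gives `N + 1` points of energy at most
`E + 2 E / N + V_s(0)`. For `s < 0` the pair-energy is continuous up to coincident points and the
sphere has no isolated points, so moving the copy slightly makes the points distinct while
changing the energy arbitrarily little; hence `v_s(N + 1)` is bounded by the normalized energy
of the doubled configuration.
-/

open Metric Set

section Sphere

variable {E : Type*} [NormedAddCommGroup E] [NormedSpace ℝ E] {c : E} {r : ℝ}

theorem nontrivial_sphere [Nontrivial E] (hr : 0 < r) : Nontrivial (sphere c r) := by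
  obtain ⟨x, hx⟩ := (NormedSpace.sphere_nonempty (x := c)).2 hr.le
  have hx' : (2 : ℝ) • c - x ∈ sphere c r := by
    rw [mem_sphere_iff_norm] at hx ⊢
    rw [← hx, ← norm_neg]
    congr 1
    module
  refine ⟨⟨x, hx⟩, ⟨_, hx'⟩, fun h ↦ ?_⟩
  have hxc : x = c := by
    have := congrArg Subtype.val h
    simp only at this
    linear_combination (norm := module) (1 / 2 : ℝ) • this
  exact (ne_of_mem_sphere hx hr.ne') hxc

theorem mem_closure_sphere_sdiff_finite (hE : 1 < Module.rank ℝ E) (hr : 0 < r) {t : Set E}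
    (ht : t.Finite) {x : E} (hx : x ∈ sphere c r) : x ∈ closure (sphere c r \ t) := by
  have : Nontrivial E := rank_pos_iff_nontrivial.1 (zero_lt_one.trans hE)
  have := isConnected_iff_connectedSpace.1 (isConnected_sphere hE c hr.le)
  have := nontrivial_sphere (c := c) hr
  -- a connected nontrivial T1 space has no isolated points, so cofinite sets are dense in it
  have hdense := (dense_univ (X := sphere c r)).sdiff_finite (ht.preimage Subtype.val_injective.injOn)
  have := closure_subtype.1 (hdense.closure_eq ▸ mem_univ (⟨x, hx⟩ : sphere c r))
  convert this using 2
  ext y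
  simp only [Set.mem_sdiff, mem_image, mem_preimage, mem_univ, true_and, Subtype.exists,
    exists_and_right, exists_eq_right, exists_prop]

theorem infinite_sphere (hE : 1 < Module.rank ℝ E) (hr : 0 < r) : (sphere c r).Infinite := by
  have : Nontrivial E := rank_pos_iff_nontrivial.1 (zero_lt_one.trans hE)
  intro hfin
  obtain ⟨x, hx⟩ := (NormedSpace.sphere_nonempty (x := c)).2 hr.le
  simpa using mem_closure_sphere_sdiff_finite hE hr hfin hx

end Sphere

section PairSums

variable {ι M : Type*} [Fintype ι] [LinearOrder ι] [AddCommMonoid M]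

theorem sum_sum_eq_two_nsmul_sum_sum_lt_add_sum_diag (v : ι → ι → M)
    (hv : ∀ i j, v i j = v j i) :
    ∑ i, ∑ j, v i j = 2 • ∑ i, ∑ j, (if i < j then v i j else 0) + ∑ i, v i i := by
  have hsplit : ∀ i j, v i j = ((if i < j then v i j else 0) + (if j < i then v j i else 0))
      + if i = j then v i j else 0 := fun i j ↦ by
    rcases lt_trichotomy i j with h | rfl | h
    · simp [h, h.ne, h.not_gt]
    · simp
    · simp [h, h.ne', h.not_gt, hv i j]
  rw [Finset.sum_congr rfl fun i _ ↦ Finset.sum_congr rfl fun j _ ↦ hsplit i j]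
  simp only [Finset.sum_add_distrib, Finset.sum_ite_eq, Finset.mem_univ, if_true]
  rw [Finset.sum_comm (f := fun i j ↦ if j < i then v j i else 0), two_nsmul]

theorem sum_sum_lt_castSucc {n : ℕ} (v : Fin (n + 1) → Fin (n + 1) → M) :
    ∑ i, ∑ j, (if i < j then v i j else 0)
      = ∑ i : Fin n, ∑ j : Fin n, (if i < j then v i.castSucc j.castSucc else 0)
        + ∑ i : Fin n, v i.castSucc (Fin.last n) := by
  simp [Fin.sum_univ_castSucc, Finset.sum_add_distrib, (Fin.castSucc_lt_last _).not_gt]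

end PairSums

local notation "ℝ³" => EuclideanSpace ℝ (Fin 3)

section Riesz

variable {s : ℝ} {N : ℕ}

theorem Vpair_of_ne_zero (hs : s ≠ 0) (r : ℝ) : Vpair s r = (r ^ (-s) - 1) / s := if_neg hs

theorem Vpair_zero (hs : s < 0) : Vpair s 0 = -(1 / s) := by
  rw [Vpair_of_ne_zero hs.ne, Real.zero_rpow (neg_ne_zero.2 hs.ne)]
  ring

theorem continuous_Vpair (hs : s < 0) : Continuous (Vpair s) := by
  simp_rw [funext (Vpair_of_ne_zero hs.ne)]
  exact ((Real.continuous_rpow_const (neg_nonneg.2 hs.le)).sub continuous_const).div_const s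

noncomputable def pairEnergy (s : ℝ) (q : Fin N → ℝ³) : ℝ :=
  ∑ i, ∑ j, if i < j then Vpair s ‖q i - q j‖ else 0

theorem avgE_eq (s : ℝ) (q : Fin N → ℝ³) :
    avgE s N q = 2 / ((N : ℝ) * ((N : ℝ) - 1)) * pairEnergy s q := rfl

def energySet (s : ℝ) (N : ℕ) : Set ℝ :=
  { E : ℝ | ∃ q : Fin N → ℝ³, (∀ i, ‖q i‖ = 1) ∧ Function.Injective q ∧ E = avgE s N q }

theorem vmin_eq (s : ℝ) (N : ℕ) : vmin s N = sInf (energySet s N) := rfl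

theorem continuous_avgE (hs : s < 0) : Continuous (avgE s N) := by
  refine continuous_const.mul (continuous_finsetSum _ fun i _ ↦ continuous_finsetSum _ fun j _ ↦ ?_)
  split_ifs
  · exact (continuous_Vpair hs).comp (by fun_prop)
  · exact continuous_const

theorem rank_euclideanSpace_three : 1 < Module.rank ℝ ℝ³ := by
  rw [← Module.finrank_eq_rank, finrank_euclideanSpace_fin]
  norm_num

theorem bddBelow_energySet (hs : s < 0) (N : ℕ) : BddBelow (energySet s N) := by
  refine (((isCompact_univ_pi fun _ ↦ isCompact_sphere (0 : ℝ³) 1).image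
    (continuous_avgE (N := N) hs)).bddBelow).mono ?_
  rintro _ ⟨q, hq, -, rfl⟩
  exact ⟨q, fun i _ ↦ mem_sphere_zero_iff_norm.2 (hq i), rfl⟩

theorem energySet_nonempty (s : ℝ) (N : ℕ) : (energySet s N).Nonempty := by
  let e := (infinite_sphere (c := (0 : ℝ³)) rank_euclideanSpace_three one_pos).natEmbedding
  refine ⟨_, fun i ↦ e i, fun i ↦ mem_sphere_zero_iff_norm.1 (e i).2, ?_, rfl⟩
  exact fun i j h ↦ Fin.ext (e.injective (Subtype.ext h))

theorem pairEnergy_snoc (s : ℝ) (q : Fin N → ℝ³) (x : ℝ³) :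
    pairEnergy s (Fin.snoc q x : Fin (N + 1) → ℝ³) = pairEnergy s q + ∑ i, Vpair s ‖q i - x‖ := by
  simp only [pairEnergy, sum_sum_lt_castSucc, Fin.snoc_castSucc, Fin.snoc_last]

theorem exists_sum_Vpair_le (hN : 0 < N) (s : ℝ) (q : Fin N → ℝ³) :
    ∃ k, ∑ i, Vpair s ‖q i - q k‖ ≤ 2 * pairEnergy s q / N + Vpair s 0 := by
  have hsum : ∑ k, ∑ i, Vpair s ‖q i - q k‖ = ∑ _k : Fin N, (2 * pairEnergy s q / N + Vpair s 0) := by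
    rw [Finset.sum_comm, sum_sum_eq_two_nsmul_sum_sum_lt_add_sum_diag _ fun i j ↦ by rw [norm_sub_rev]]
    simp only [sub_self, norm_zero, Finset.sum_const, Finset.card_univ, Fintype.card_fin,
      nsmul_eq_mul, Nat.cast_ofNat, pairEnergy]
    field_simp
  obtain ⟨k, -, hk⟩ := Finset.exists_le_of_sum_le ⟨⟨0, hN⟩, Finset.mem_univ _⟩ hsum.le
  exact ⟨k, hk⟩

theorem vmin_le_avgE_snoc (hs : s < 0) {q : Fin N → ℝ³} (hq : ∀ i, ‖q i‖ = 1)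
    (hq_inj : Function.Injective q) {x : ℝ³} (hx : ‖x‖ = 1) :
    vmin s (N + 1) ≤ avgE s (N + 1) (Fin.snoc q x) := by
  let f : ℝ³ → ℝ := fun p ↦ avgE s (N + 1) (Fin.snoc q p)
  have hf : Continuous f := (continuous_avgE hs).comp (continuous_const.finSnoc continuous_id)
  have himage : f '' (sphere 0 1 \ range q) ⊆ energySet s (N + 1) := by
    rintro _ ⟨p, ⟨hp, hpq⟩, rfl⟩
    refine ⟨_, fun i ↦ ?_, ?_, rfl⟩
    · induction i using Fin.lastCases <;> simp [hq, mem_sphere_zero_iff_norm.1 hp]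
    · exact Fin.snoc_injective_iff.2 ⟨hq_inj, hpq⟩
  have hx_mem : x ∈ closure (sphere 0 1 \ range q) :=
    mem_closure_sphere_sdiff_finite rank_euclideanSpace_three one_pos (finite_range q)
      (mem_sphere_zero_iff_norm.2 hx)
  rw [vmin_eq]
  exact closure_minimal (fun _ hE ↦ csInf_le (bddBelow_energySet hs _) hE) isClosed_Ici
    (closure_mono himage (map_mem_closure (f := f) hf hx_mem (mapsTo_image f _)))

theorem vmin_succ_le (hs : s < 0) (hN : 2 ≤ N) {q : Fin N → ℝ³}
    (hq : ∀ i, ‖q i‖ = 1) (hq_inj : Function.Injective q) :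
    ((N : ℝ) + 1) * N * vmin s (N + 1) ≤ ((N : ℝ) + 2) * (N - 1) * avgE s N q + 2 * Vpair s 0 := by
  obtain ⟨k, hk⟩ := exists_sum_Vpair_le (by omega) s q
  have hvmin := vmin_le_avgE_snoc hs hq hq_inj (hq k)
  rw [avgE_eq, pairEnergy_snoc] at hvmin
  push_cast at hvmin
  rw [add_sub_cancel_right] at hvmin
  have hN' : (2 : ℝ) ≤ N := by exact_mod_cast hN
  have hN1 : (N : ℝ) - 1 ≠ 0 := by linarith
  calc ((N : ℝ) + 1) * N * vmin s (N + 1)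
      ≤ ((N : ℝ) + 1) * N *
          (2 / ((N + 1) * N) * (pairEnergy s q + ∑ i, Vpair s ‖q i - q k‖)) := by gcongr
    _ = 2 * (pairEnergy s q + ∑ i, Vpair s ‖q i - q k‖) := by field_simp
    _ ≤ 2 * (pairEnergy s q + (2 * pairEnergy s q / N + Vpair s 0)) := by gcongr
    _ = _ := by
        rw [avgE_eq]
        field_simp
        ring

end Riesz

theorem stmt15 (s : ℝ) (hs : s < 0) (N : ℕ) (hN : 2 < N) :
    vmin s N ≥ ((N : ℝ) + 1) * (N : ℝ) / (((N : ℝ) + 2) * ((N : ℝ) - 1)) * vmin s (N + 1)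
      - 2 * (-(1 / s)) / (((N : ℝ) + 2) * ((N : ℝ) - 1)) := by
  have hN' : (3 : ℝ) ≤ N := by exact_mod_cast hN
  rw [ge_iff_le, vmin_eq s N, div_mul_eq_mul_div, ← sub_div]
  refine le_csInf (energySet_nonempty s N) ?_
  rintro _ ⟨q, hq, hq_inj, rfl⟩
  rw [div_le_iff₀ (by nlinarith)]
  have := vmin_succ_le hs hN.le hq hq_inj
  rw [Vpair_zero hs] at this
  linarith
end
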